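/- arXiv:1806.02392 — 3 statements merged into one kernel-verified Lean document; each statement's English description precedes it below -/
import Mathlib

section
/- In the split-biquaternion algebra A = ℍ ⊕ ℍε with ε central and ε² = 1, if Q₁ = q_{r1} + q_{d1}ε and Q₂ = q_{r2} + q_{d2}ε both satisfy the orthogonality condition q_r q_d† + q_d q_r† = 0 and their product also satisfies this condition, then the norm is multiplicative: ‖Q₁Q₂‖ = ‖Q₁‖ ‖Q₂‖, where ‖Q‖² := Re(Q Q†) = ‖q_r‖² + ‖q_d‖². -/
/-!
Writing `N x = x x†` (a central real), `‖Q₁Q₂‖²` is `N(a c + b d) + N(a d + b c)` for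
`Q₁ = a + b ε`, `Q₂ = c + d ε`. Expanding gives `a (N c + N d) a† + b (N c + N d) b†` plus the
cross terms `a (c d† + d c†) b† + b (c d† + d c†) a†`, which vanish by the orthogonality of `Q₂`;
the rest is `(N a + N b)(N c + N d)` because `N c + N d` is central.
-/

/-- Multiplication in the split-biquaternion algebra `A = ℍ ⊕ ℍε`, where `ε`
is central and `ε² = +1`. -/
noncomputable def biqMul (Q P : Quaternion ℝ × Quaternion ℝ) : Quaternion ℝ × Quaternion ℝ :=
  (Q.1 * P.1 + Q.2 * P.2, Q.1 * P.2 + Q.2 * P.1)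

/-- The norm `‖Q‖ := √(‖q_r‖² + ‖q_d‖²)`, so that `‖Q‖² = Re(Q Q†)`. -/
noncomputable def biqNorm (Q : Quaternion ℝ × Quaternion ℝ) : ℝ :=
  Real.sqrt (‖Q.1‖ ^ 2 + ‖Q.2‖ ^ 2)

open Quaternion

theorem Quaternion.normSq_add_normSq_of_mul_star_add_mul_star_eq_zero {R : Type*} [CommRing R]
    (a b c d : ℍ[R]) (h : c * star d + d * star c = 0) :
    normSq (a * c + b * d) + normSq (a * d + b * c) =
      (normSq a + normSq b) * (normSq c + normSq d) := by
  apply coe_injective (R := R)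
  set r := normSq c + normSq d
  have expand : (a * c + b * d) * star (a * c + b * d) + (a * d + b * c) * star (a * d + b * c) =
      a * (c * star c + d * star d) * star a + b * (c * star c + d * star d) * star b
        + a * (c * star d + d * star c) * star b + b * (c * star d + d * star c) * star a := by
    simp only [star_add, star_mul]
    noncomm_ring
  have hr : c * star c + d * star d = (r : ℍ[R]) := by
    rw [self_mul_star, self_mul_star, coe_add]
  rw [h, hr, mul_zero, zero_mul, mul_zero, zero_mul, add_zero, add_zero, ← coe_commutes,
    ← coe_commutes, mul_assoc, mul_assoc, self_mul_star, self_mul_star, self_mul_star,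
    self_mul_star] at expand
  rw [coe_add, expand, ← coe_mul, ← coe_mul, ← coe_add, ← mul_add, mul_comm]

theorem biqNorm_eq_sqrt_normSq (Q : ℍ × ℍ) : biqNorm Q = √(normSq Q.1 + normSq Q.2) := by
  simp only [biqNorm, normSq_eq_norm_mul_self, sq]

theorem biquaternion_norm_multiplicative_general
    (Q₁ Q₂ : Quaternion ℝ × Quaternion ℝ)
    (h₂ : Q₂.1 * star Q₂.2 + Q₂.2 * star Q₂.1 = 0) :
    biqNorm (biqMul Q₁ Q₂) = biqNorm Q₁ * biqNorm Q₂ := by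
  rw [biqNorm_eq_sqrt_normSq, biqNorm_eq_sqrt_normSq, biqNorm_eq_sqrt_normSq, biqMul,
    normSq_add_normSq_of_mul_star_add_mul_star_eq_zero _ _ _ _ h₂,
    Real.sqrt_mul (add_nonneg normSq_nonneg normSq_nonneg)]

/-- If `Q₁`, `Q₂` and their product all satisfy the orthogonality condition
`q_r q_d† + q_d q_r† = 0`, then the norm is multiplicative:
`‖Q₁Q₂‖ = ‖Q₁‖ ‖Q₂‖`. -/
theorem biquaternion_norm_multiplicative
    (Q₁ Q₂ : Quaternion ℝ × Quaternion ℝ)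
    (h₁ : Q₁.1 * star Q₁.2 + Q₁.2 * star Q₁.1 = 0)
    (h₂ : Q₂.1 * star Q₂.2 + Q₂.2 * star Q₂.1 = 0)
    (h₁₂ : (biqMul Q₁ Q₂).1 * star (biqMul Q₁ Q₂).2 +
        (biqMul Q₁ Q₂).2 * star (biqMul Q₁ Q₂).1 = 0) :
    biqNorm (biqMul Q₁ Q₂) = biqNorm Q₁ * biqNorm Q₂ :=
  biquaternion_norm_multiplicative_general Q₁ Q₂ h₂
end

section
/- (CHSH bound ±2 for single-measure averages) If A, A', B, B' : Λ → {−1, +1} are measurable functions and ρ is a probability measure on Λ, then |∫ [A(λ)B(λ) + A(λ)B'(λ) + A'(λ)B(λ) − A'(λ)B'(λ)] dρ(λ)| ≤ 2. -/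
open MeasureTheory

/-- (CHSH bound ±2 for single-measure averages) For measurable ±1-valued
functions `A, A', B, B'` on a probability space `(Λ, ρ)`, the average of the
pointwise CHSH combination is bounded in absolute value by 2. -/
theorem chsh_two_bound {Λ : Type*} [MeasurableSpace Λ]
    (ρ : Measure Λ) [IsProbabilityMeasure ρ]
    (A A' B B' : Λ → ℝ)
    (hA : Measurable A) (hA' : Measurable A')
    (hB : Measurable B) (hB' : Measurable B')
    (hAv : ∀ l, A l = 1 ∨ A l = -1) (hA'v : ∀ l, A' l = 1 ∨ A' l = -1)
    (hBv : ∀ l, B l = 1 ∨ B l = -1) (hB'v : ∀ l, B' l = 1 ∨ B' l = -1) :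
    |∫ l, (A l * B l + A l * B' l + A' l * B l - A' l * B' l) ∂ρ| ≤ 2 := by
  have h : ∀ᵐ l ∂ρ, ‖A l * B l + A l * B' l + A' l * B l - A' l * B' l‖ ≤ 2 := by
    refine Filter.Eventually.of_forall fun l => ?_
    rcases hAv l with h1 | h1 <;> rcases hA'v l with h2 | h2 <;>
      rcases hBv l with h3 | h3 <;> rcases hB'v l with h4 | h4 <;>
      simp [h1, h2, h3, h4] <;> norm_num
  have := norm_integral_le_of_norm_le_const (μ := ρ) h
  simpa using this
end

section
/- (Tsirelson-type trigonometric bound) For any angles θ₁, θ₂, θ₃, θ₄ arising as angles between four unit vectors x, x', y, y' in ℝ³ (θ₁ = angle(x,y), θ₂ = angle(x,y'), θ₃ = angle(x',y), θ₄ = angle(x',y')), we have |−cos θ₁ − cos θ₂ − cos θ₃ + cos θ₄| = |x·y + x·y' + x'·y − x'·y'| ≤ 2√2. -/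
/-! Regroup the CHSH expression as `⟪x, y + y'⟫ + ⟪x', y - y'⟫`. By Cauchy–Schwarz it is at most
`‖y + y'‖ + ‖y - y'‖` in absolute value, and by the parallelogram law the squares of these two norms
sum to `4`, so their sum is at most `√(2 · 4) = 2√2`. -/

open RealInnerProductSpace

theorem norm_add_add_norm_sub_le {E : Type*} [NormedAddCommGroup E] [InnerProductSpace ℝ E]
    (y y' : E) : ‖y + y'‖ + ‖y - y'‖ ≤ 2 * √(‖y‖ ^ 2 + ‖y'‖ ^ 2) := by
  have hpar := parallelogram_law_with_norm ℝ y y'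
  have hsq : (2 * √(‖y‖ ^ 2 + ‖y'‖ ^ 2)) ^ 2 = 4 * (‖y‖ ^ 2 + ‖y'‖ ^ 2) := by
    rw [mul_pow, Real.sq_sqrt (by positivity)]; norm_num
  refine le_of_pow_le_pow_left₀ two_ne_zero (by positivity) ?_
  nlinarith [sq_nonneg (‖y + y'‖ - ‖y - y'‖)]

/-- (Tsirelson-type trigonometric bound) For unit vectors `x, x', y, y'` in
ℝ³, `|x·y + x·y' + x'·y − x'·y'| ≤ 2√2`; the inner products are the cosines
of the angles between the vectors. -/
theorem tsirelson_bound (x x' y y' : EuclideanSpace ℝ (Fin 3))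
    (hx : ‖x‖ = 1) (hx' : ‖x'‖ = 1) (hy : ‖y‖ = 1) (hy' : ‖y'‖ = 1) :
    |inner ℝ x y + inner ℝ x y' + inner ℝ x' y - inner (𝕜 := ℝ) x' y'| ≤
      2 * Real.sqrt 2 := by
  have hxv : |⟪x, y + y'⟫| ≤ ‖y + y'‖ := by simpa [hx] using abs_real_inner_le_norm x (y + y')
  have hx'v : |⟪x', y - y'⟫| ≤ ‖y - y'‖ := by simpa [hx'] using abs_real_inner_le_norm x' (y - y')
  calc |⟪x, y⟫ + ⟪x, y'⟫ + ⟪x', y⟫ - ⟪x', y'⟫|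
      = |⟪x, y + y'⟫ + ⟪x', y - y'⟫| := by rw [inner_add_right, inner_sub_right]; ring_nf
    _ ≤ ‖y + y'‖ + ‖y - y'‖ := (abs_add_le _ _).trans (add_le_add hxv hx'v)
    _ ≤ 2 * √(‖y‖ ^ 2 + ‖y'‖ ^ 2) := norm_add_add_norm_sub_le y y'
    _ = 2 * √2 := by rw [hy, hy']; norm_num
end
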